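/- arXiv:2411.02365 — 9 statements merged into one kernel-verified Lean document; each statement's English description precedes it below -/
import Mathlib

section
/- For every set A of k integers and every h with 1 ≤ h ≤ k, the h-fold restricted sumset satisfies |ĥA| ≥ hk - h² + 1. -/
open Pointwise Finset

/-- The `h`-fold sumset of a finite set `A`. -/
def hfold {G : Type*} [AddCommMonoid G] [DecidableEq G] : ℕ → Finset G → Finset G
  | 0, _ => {0}
  | n + 1, A => hfold n A + A

/-- The `h`-fold restricted sumset of a finite set `A`: sums of `h` distinct elements. -/
def rfold {G : Type*} [AddCommMonoid G] [DecidableEq G] (h : ℕ) (A : Finset G) : Finset G :=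
  (A.powersetCard h).image (fun S => S.sum id)

theorem stmt7 (h k : ℕ) (hh : 1 ≤ h) (hhk : h ≤ k) (A : Finset ℤ) (hA : A.card = k) :
    h * k - h ^ 2 + 1 ≤ (rfold h A).card := by
  classical
  set d : ℕ := k - h with hd
  set a : ℕ → ℤ := fun i => if hi : i < k then A.orderEmbOfFin hA ⟨i, hi⟩ else 0 with ha
  have amono : ∀ i j : ℕ, i < j → j < k → a i < a j := by
    intro i j hij hj
    simp only [ha, dif_pos hj, dif_pos (hij.trans hj)]
    exact (A.orderEmbOfFin hA).strictMono hij
  have amem : ∀ i : ℕ, i < k → a i ∈ A := by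
    intro i hi
    simp only [ha, dif_pos hi]
    exact Finset.orderEmbOfFin_mem A hA _
  set Q : ℕ → ℕ := fun t => min (t / d) (h - 1) with hQ
  set R : ℕ → ℕ := fun t => t - Q t * d with hR
  set S : ℕ → Finset ℕ := fun t =>
    insert (h - 1 - Q t + R t) (Finset.range (h - 1 - Q t) ∪ Finset.Ico (k - Q t) k) with hS
  set f : ℕ → ℤ := fun t => ∑ i ∈ S t, a i with hf
  have hQle : ∀ t, Q t ≤ h - 1 := fun t => min_le_right _ _
  have hQRd : ∀ t, Q t * d ≤ t := fun t =>
    le_trans (Nat.mul_le_mul_right d (min_le_left _ _)) (Nat.div_mul_le_self t d)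
  have hRle : ∀ t, t ≤ h * d → R t ≤ d := by
    intro t ht
    rcases Nat.eq_zero_or_pos d with hd0 | hd0
    · have : t = 0 := by rw [hd0] at ht; omega
      subst this
      have : Q 0 * d ≤ 0 := hQRd 0
      simp only [hR]; omega
    · rcases lt_or_eq_of_le ht with ht' | ht'
      · have hq : t / d < h := (Nat.div_lt_iff_lt_mul hd0).mpr ht'
        have hQt : Q t = t / d := min_eq_left (by omega)
        have hmod := Nat.div_add_mod t d
        have hml : d * (t / d) = (t / d) * d := mul_comm _ _
        have hmd : t % d < d := Nat.mod_lt t hd0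
        simp only [hR, hQt]
        omega
      · -- t = h * d
        have hq : t / d = h := by rw [ht', Nat.mul_div_cancel _ hd0]
        have hQt : Q t = h - 1 := by rw [hQ]; simp only [hq]; omega
        have key : (h - 1) * d + d = h * d := by
          have : h - 1 + 1 = h := by omega
          calc (h - 1) * d + d = (h - 1 + 1) * d := by ring
            _ = h * d := by rw [this]
        simp only [hR, hQt]
        omega
  -- step lemma
  have step : ∀ t, t < h * d → f t < f (t + 1) := by
    intro t ht
    have hd0 : 0 < d := by
      rcases Nat.eq_zero_or_pos d with h0 | h0
      · rw [h0] at ht; omega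
      · exact h0
    have hq : t / d < h := (Nat.div_lt_iff_lt_mul hd0).mpr ht
    have hQt : Q t = t / d := min_eq_left (by omega)
    have hmod := Nat.div_add_mod t d
    have hmd : t % d < d := Nat.mod_lt t hd0
    have hRt : R t = t % d := by
      have hml : d * (t / d) = (t / d) * d := mul_comm _ _
      simp only [hR, hQt]; omega
    have hcase : (Q (t + 1) = Q t ∧ R (t + 1) = R t + 1) ∨
        (Q (t + 1) = Q t + 1 ∧ R (t + 1) = 0 ∧ R t + 1 = d ∧ Q t + 1 < h) := by
      rcases lt_or_eq_of_le (Nat.succ_le_of_lt hmd) with hr1 | hr1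
      · -- t % d + 1 < d : quotient unchanged
        left
        have hdiv : (t + 1) / d = t / d := by
          apply Nat.div_eq_of_lt_le
          · calc t / d * d ≤ t := Nat.div_mul_le_self t d
              _ ≤ t + 1 := Nat.le_succ t
          · have : t + 1 < d * (t / d) + d := by omega
            calc t + 1 < d * (t / d) + d := this
              _ = (t / d + 1) * d := by ring
        have hQ1 : Q (t + 1) = Q t := by
          simp only [hQ, hdiv]
        constructor
        · exact hQ1
        · have hml : Q t * d ≤ t := hQRd t
          simp only [hR, hQ1]; omega
      · -- t % d + 1 = d
        have ht1 : t + 1 = (t / d + 1) * d := by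
          have : d * (t / d) + d = t + 1 := by omega
          calc t + 1 = d * (t / d) + d := this.symm
            _ = (t / d + 1) * d := by ring
        have hdiv : (t + 1) / d = t / d + 1 := by rw [ht1, Nat.mul_div_cancel _ hd0]
        rcases lt_or_eq_of_le (Nat.succ_le_of_lt hq) with hqh | hqh
        · -- t/d + 1 < h
          right
          have hQ1 : Q (t + 1) = t / d + 1 := by
            rw [hQ]; simp only [hdiv]; exact min_eq_left (by omega)
          refine ⟨by rw [hQ1, hQt], ?_, by omega, by rw [hQt]; omega⟩
          simp only [hR, hQ1]
          rw [← ht1]; omega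
        · -- t/d + 1 = h
          left
          have hQ1 : Q (t + 1) = h - 1 := by
            rw [hQ]; simp only [hdiv, hqh]
            omega
          have hQt' : Q t = h - 1 := by rw [hQt]; omega
          constructor
          · rw [hQ1, hQt']
          · have hml : Q t * d ≤ t := hQRd t
            simp only [hR, hQ1, ← hQt']
            omega
    have hQtle : Q t ≤ h - 1 := hQle t
    have hRtlt : R t < d := by rw [hRt]; exact hmd
    rcases hcase with ⟨hq1, hr1⟩ | ⟨hq1, hr1, hrd1, hqh⟩
    · -- same quotient, moving element increases by one
      set m : ℕ := h - 1 - Q t + R t with hm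
      set C : Finset ℕ := Finset.range (h - 1 - Q t) ∪ Finset.Ico (k - Q t) k with hC
      have hSt : S t = insert m C := rfl
      have hSt1 : S (t + 1) = insert (m + 1) C := by
        simp only [hS, hq1, hr1, ← hC]
        congr 1
      have hmC : m ∉ C := by
        simp only [hC, Finset.mem_union, Finset.mem_range, Finset.mem_Ico, hm]
        omega
      have hm1C : (m + 1) ∉ C := by
        simp only [hC, Finset.mem_union, Finset.mem_range, Finset.mem_Ico, hm]
        omega
      have hflt : f t = a m + ∑ i ∈ C, a i := by
        rw [hf]; simp only [hSt]; exact Finset.sum_insert hmC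
      have hflt1 : f (t + 1) = a (m + 1) + ∑ i ∈ C, a i := by
        rw [hf]; simp only [hSt1]; exact Finset.sum_insert hm1C
      rw [hflt, hflt1]
      have : a m < a (m + 1) := amono m (m + 1) (Nat.lt_succ_self m) (by omega)
      linarith
    · -- quotient increases
      set C : Finset ℕ := Finset.range (h - 1 - Q t) ∪ Finset.Ico (k - Q t) k with hC
      have hSt : S t = insert (k - 2 - Q t) C := by
        simp only [hS, ← hC]
        congr 1 <;> omega
      have hSt1 : S (t + 1) = insert (k - 1 - Q t) C := by
        simp only [hS, hq1, hr1]
        ext x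
        simp only [Finset.mem_insert, Finset.mem_union, Finset.mem_range, Finset.mem_Ico,
          hC]
        omega
      have hmC : (k - 2 - Q t) ∉ C := by
        simp only [hC, Finset.mem_union, Finset.mem_range, Finset.mem_Ico]
        omega
      have hm1C : (k - 1 - Q t) ∉ C := by
        simp only [hC, Finset.mem_union, Finset.mem_range, Finset.mem_Ico]
        omega
      have hflt : f t = a (k - 2 - Q t) + ∑ i ∈ C, a i := by
        rw [hf]; simp only [hSt]; exact Finset.sum_insert hmC
      have hflt1 : f (t + 1) = a (k - 1 - Q t) + ∑ i ∈ C, a i := by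
        rw [hf]; simp only [hSt1]; exact Finset.sum_insert hm1C
      rw [hflt, hflt1]
      have : a (k - 2 - Q t) < a (k - 1 - Q t) :=
        amono _ _ (by omega) (by omega)
      linarith
  -- monotonicity on [0, h*d]
  have mono : ∀ s t : ℕ, s < t → t ≤ h * d → f s < f t := by
    intro s t hst ht
    induction t with
    | zero => omega
    | succ n ih =>
      rcases lt_or_eq_of_le (Nat.lt_succ_iff.mp hst) with h' | h'
      · exact (ih h' (by omega)).trans (step n (by omega))
      · rw [h']; exact step n (by omega)
  -- membership
  have hmem : ∀ t, t ≤ h * d → f t ∈ rfold h A := by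
    intro t ht
    have hq := hQle t
    have hr := hRle t ht
    have hsub : ∀ i ∈ S t, i < k := by
      intro i hi
      simp only [hS, Finset.mem_insert, Finset.mem_union, Finset.mem_range,
        Finset.mem_Ico] at hi
      omega
    have hcard : (S t).card = h := by
      rw [hS]
      rw [Finset.card_insert_of_notMem, Finset.card_union_of_disjoint,
        Finset.card_range, Nat.card_Ico]
      · omega
      · rw [Finset.disjoint_left]
        intro x hx hx'
        simp only [Finset.mem_range] at hx
        simp only [Finset.mem_Ico] at hx'
        omega
      · simp only [Finset.mem_union, Finset.mem_range, Finset.mem_Ico]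
        omega
    have hinj : Set.InjOn a (S t) := by
      intro i hi j hj hij
      by_contra hne
      rcases lt_or_gt_of_ne hne with hlt | hlt
      · exact absurd hij (ne_of_lt (amono i j hlt (hsub j hj)))
      · exact absurd hij.symm (ne_of_lt (amono j i hlt (hsub i hi)))
    refine Finset.mem_image.mpr ⟨(S t).image a, ?_, ?_⟩
    · rw [Finset.mem_powersetCard]
      constructor
      · intro x hx
        rcases Finset.mem_image.mp hx with ⟨i, hi, rfl⟩
        exact amem i (hsub i hi)
      · rw [Finset.card_image_of_injOn hinj, hcard]
    · rw [Finset.sum_image (fun i hi j hj hij => hinj hi hj hij)]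
      rfl
  -- conclude
  have h2 : h * k = h * d + h * h := by
    rw [hd, ← Nat.mul_add, Nat.sub_add_cancel hhk]
  have h3 : h * k - h ^ 2 + 1 = h * d + 1 := by
    rw [pow_two, h2, Nat.add_sub_cancel]
  rw [h3]
  have hcount : (Finset.range (h * d + 1)).card ≤ (rfold h A).card := by
    apply Finset.card_le_card_of_injOn f
    · intro t htm
      exact hmem t (by simpa using Nat.lt_succ_iff.mp (Finset.mem_range.mp htm))
    · intro s hs t ht hst
      by_contra hne
      rcases lt_or_gt_of_ne hne with hlt | hlt
      · exact absurd hst (ne_of_lt (mono s t hlt (Nat.lt_succ_iff.mp (Finset.mem_range.mp ht))))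
      · exact absurd hst.symm (ne_of_lt (mono t s hlt (Nat.lt_succ_iff.mp (Finset.mem_range.mp hs))))
  simpa using hcount
end

section
/- If A is an arithmetic progression of k integers with nonzero common difference and 1 ≤ h ≤ k, then |ĥA| = hk - h² + 1. -/
open Pointwise Finset

/-!
An injective affine map `x ↦ a + x * d` carries the `h`-subsets of `A` bijectively to those of its
image, shifting every sum by the same affine map, so it suffices to treat the interval
`[0, k)`. The sum of an `h`-subset of an integer interval `[m, n)` lies between the sums of the
lowest and of the highest `h` elements, and every value in between occurs: a subset other than the
top block contains some `i` with `i + 1 ∉ S` still inside the interval, and trading `i` for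
`i + 1` raises the sum by exactly one. The sums therefore fill an interval with `h (k - h) + 1`
elements.
-/

theorem mem_rfold {G : Type*} [AddCommMonoid G] [DecidableEq G] {h : ℕ} {A : Finset G} {y : G} :
    y ∈ rfold h A ↔ ∃ S ⊆ A, #S = h ∧ ∑ x ∈ S, x = y := by
  simp [rfold, and_assoc]

theorem rfold_image_add_hom {M G : Type*} [AddCommMonoid M] [AddCancelCommMonoid G]
    [DecidableEq M] [DecidableEq G] (h : ℕ) (A : Finset M) (a : G) (φ : M →+ G)
    (hφ : Function.Injective φ) :
    rfold h (A.image fun x => a + φ x) = (rfold h A).image fun m => h • a + φ m := by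
  have hA : A.image (fun x => a + φ x)
      = A.map ⟨fun x => a + φ x, (add_right_injective a).comp hφ⟩ := by
    rw [map_eq_image]; rfl
  rw [hA, rfold, rfold, powersetCard_map, map_eq_image, image_image, image_image]
  refine image_congr fun S hS => ?_
  simp only [Function.comp_apply, RelEmbedding.coe_toEmbedding, mapEmbedding_apply, sum_map,
    Function.Embedding.coeFn_mk, id, sum_add_distrib, sum_const, (mem_powersetCard.1 hS).2,
    map_sum]

theorem card_rfold_image_add_hom {M G : Type*} [AddCommMonoid M] [AddCancelCommMonoid G]
    [DecidableEq M] [DecidableEq G] (h : ℕ) (A : Finset M) (a : G) (φ : M →+ G)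
    (hφ : Function.Injective φ) :
    #(rfold h (A.image fun x => a + φ x)) = #(rfold h A) := by
  rw [rfold_image_add_hom h A a φ hφ]
  exact card_image_of_injective _ ((add_right_injective _).comp hφ)

theorem sum_Ico_sub_eq_sum_Ico_add (h : ℕ) (m n : ℤ) :
    ∑ x ∈ Ico (n - h) n, x = ∑ x ∈ Ico m (m + h), x + h * (n - m - h) := by
  have hshift : Ico (n - h) n = (Ico m (m + h)).image (· + (n - m - h)) := by
    rw [image_add_right_Ico]; congr 1 <;> ring
  rw [hshift, sum_image fun _ _ _ _ => add_right_cancel, sum_add_distrib, sum_const, Int.card_Ico]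
  simp

theorem sum_mem_Icc_of_subset_Ico {m n : ℤ} {S : Finset ℤ} (hS : S ⊆ Ico m n) :
    ∑ x ∈ S, x ∈ Icc (∑ x ∈ Ico m (m + #S), x) (∑ x ∈ Ico (n - #S) n, x) := by
  have htop : Ioc (n - 1 - #S) (n - 1) = Ico (n - #S) n := by
    rw [← Ico_add_one_add_one_eq_Ioc]; congr 1 <;> ring
  refine mem_Icc.2 ⟨sum_Ico_le_sum fun x hx => (mem_Ico.1 (hS hx)).1, ?_⟩
  rw [← htop]
  exact sum_le_sum_Ioc fun x hx => by linarith [(mem_Ico.1 (hS hx)).2]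

theorem exists_sum_eq_sum_add_one {m n : ℤ} {S : Finset ℤ} (hS : S ⊆ Ico m n)
    (hne : S ≠ Ico (n - #S) n) :
    ∃ T ⊆ Ico m n, #T = #S ∧ ∑ x ∈ T, x = ∑ x ∈ S, x + 1 := by
  obtain ⟨i, hiS, hin, hi⟩ : ∃ i ∈ S, i + 1 < n ∧ i + 1 ∉ S := by
    by_contra! hclosed
    obtain ⟨x, hxS, hx⟩ : ∃ x ∈ S, x ∉ Ico (n - #S) n := by
      by_contra! hsub
      exact hne (eq_of_subset_of_card_le hsub (by simp))
    have hxn : x < n := (mem_Ico.1 (hS hxS)).2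
    -- closure under successors would put all of `[x, n)` into `S`, more than `#S` elements
    have hIco : Ico x n ⊆ S := by
      suffices ∀ y, x ≤ y → y < n → y ∈ S from
        fun y hy => this y (mem_Ico.1 hy).1 (mem_Ico.1 hy).2
      intro y hxy
      induction y, hxy using Int.leInduction with
      | base => exact fun _ => hxS
      | succ y _ ih => exact fun hyn => hclosed y (ih (by omega)) hyn
    have hcard := card_le_card hIco
    simp only [Int.card_Ico, mem_Ico, not_and_or, not_le, not_lt] at hcard hx
    omega
  have hi' : i + 1 ∉ S.erase i := fun hmem => hi (mem_of_mem_erase hmem)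
  refine ⟨insert (i + 1) (S.erase i), ?_, ?_, ?_⟩
  · refine insert_subset (mem_Ico.2 ⟨?_, hin⟩) ((erase_subset i S).trans hS)
    linarith [(mem_Ico.1 (hS hiS)).1]
  · rw [card_insert_of_notMem hi', card_erase_add_one hiS]
  · rw [sum_insert hi', ← add_sum_erase S _ hiS]
    ring

theorem rfold_Ico_eq_Icc (h : ℕ) {m n : ℤ} (hmn : h ≤ n - m) :
    rfold h (Ico m n) = Icc (∑ x ∈ Ico m (m + h), x) (∑ x ∈ Ico (n - h) n, x) := by
  refine Subset.antisymm (fun y hy => ?_) fun y => ?_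
  · obtain ⟨S, hS, rfl, rfl⟩ := mem_rfold.1 hy
    exact sum_mem_Icc_of_subset_Ico hS
  · rw [mem_Icc, and_imp]
    intro hlo
    induction y, hlo using Int.leInduction with
    | base =>
      exact fun _ => mem_rfold.2 ⟨Ico m (m + h), Ico_subset_Ico_right (by omega), by simp, rfl⟩
    | succ y _ ih =>
      intro hhi
      obtain ⟨S, hS, rfl, rfl⟩ := mem_rfold.1 (ih (by omega))
      have hne : S ≠ Ico (n - #S) n := fun htop => by rw [← htop] at hhi; omega
      obtain ⟨T, hT, hcard, hsum⟩ := exists_sum_eq_sum_add_one hS hne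
      exact mem_rfold.2 ⟨T, hT, hcard, hsum⟩

theorem card_rfold_Ico (h : ℕ) {m n : ℤ} (hmn : h ≤ n - m) :
    (#(rfold h (Ico m n)) : ℤ) = h * (n - m - h) + 1 := by
  have hnonneg : 0 ≤ (h : ℤ) * (n - m - h) := mul_nonneg (by positivity) (by omega)
  rw [rfold_Ico_eq_Icc h hmn, Int.card_Icc, sum_Ico_sub_eq_sum_Ico_add h m n]
  omega

theorem image_natCast_range_eq_Ico (k : ℕ) :
    (range k).image (Nat.cast : ℕ → ℤ) = Ico 0 (k : ℤ) := by
  rw [Int.Ico_eq_finset_map, map_eq_image]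
  congr 1; ext; simp

theorem stmt8_general (h k : ℕ) (hhk : h ≤ k) (a d : ℤ) (hd : d ≠ 0) :
    (rfold h ((Finset.range k).image (fun i : ℕ => a + (i : ℤ) * d))).card
      = h * k - h ^ 2 + 1 := by
  have hA : (range k).image (fun i : ℕ => a + (i : ℤ) * d)
      = (Ico 0 (k : ℤ)).image fun x => a + AddMonoidHom.mulRight d x := by
    rw [← image_natCast_range_eq_Ico, image_image]; rfl
  have hcard := card_rfold_Ico h (m := 0) (n := k) (by omega)
  rw [hA, card_rfold_image_add_hom _ _ _ _ (mul_left_injective₀ hd)]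
  have hsq : h ^ 2 ≤ h * k := by rw [sq]; exact Nat.mul_le_mul_left h hhk
  zify [hsq]
  linarith

theorem stmt8 (h k : ℕ) (hh : 1 ≤ h) (hhk : h ≤ k) (a d : ℤ) (hd : d ≠ 0) :
    (rfold h ((Finset.range k).image (fun i : ℕ => a + (i : ℤ) * d))).card
      = h * k - h ^ 2 + 1 :=
  stmt8_general h k hhk a d hd
end

section
/- Let G be an additive abelian group of unbounded exponent (i.e., for every m there exists x ∈ G with order greater than m, or of infinite order). Then for all h, k ≥ 1, every value t that occurs as |hA| for some k-element set A of integers also occurs as |hB| for some k-element subset B of G. -/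
open Pointwise Finset

theorem stmt10 {G : Type*} [AddCommGroup G] [DecidableEq G]
    (hG : ¬ ∃ m : ℕ, 0 < m ∧ ∀ x : G, m • x = 0)
    (h k : ℕ) (hh : 1 ≤ h) (hk : 1 ≤ k) (t : ℕ)
    (ht : ∃ A : Finset ℤ, A.card = k ∧ (hfold h A).card = t) :
    ∃ B : Finset G, B.card = k ∧ (hfold h B).card = t := by
  obtain ⟨A, hA, hAt⟩ := ht
  push_neg at hG
  -- bound: natAbs of everything in A ∪ hfold h A is ≤ N
  set S : Finset ℤ := A ∪ hfold h A with hS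
  set N : ℕ := S.sup Int.natAbs with hN
  have hbound : ∀ a ∈ S, a.natAbs ≤ N := fun a ha => Finset.le_sup ha
  obtain ⟨x, hx⟩ := hG ((2 * N).factorial) (Nat.factorial_pos _)
  -- injectivity on bounded integers
  have hinj : ∀ i j : ℤ, i.natAbs ≤ N → j.natAbs ≤ N → i • x = j • x → i = j := by
    intro i j hi hj hij
    by_contra hne
    have hd : (i - j) • x = 0 := by rw [sub_smul, hij, sub_self]
    have hd0 : i - j ≠ 0 := sub_ne_zero.mpr hne
    have hna : (i - j).natAbs • x = 0 := by
      rcases Int.natAbs_eq (i - j) with he | he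
      · have : ((i - j).natAbs : ℤ) • x = 0 := by rw [← he]; exact hd
        simpa using this
      · have : ((i - j).natAbs : ℤ) • x = 0 := by
          rw [show ((i - j).natAbs : ℤ) = -(i - j) by omega, neg_smul, hd, neg_zero]
        simpa using this
    have hle : (i - j).natAbs ≤ 2 * N := by
      have := Int.natAbs_sub_le i j; omega
    have hdvd : (i - j).natAbs ∣ (2 * N).factorial :=
      Nat.dvd_factorial (Int.natAbs_pos.mpr hd0) hle
    obtain ⟨c, hc⟩ := hdvd
    apply hx
    rw [hc, mul_comm, mul_smul, hna, smul_zero]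
  -- the hom
  set f : ℤ →+ G := zmultiplesHom G x with hf
  have hfap : ∀ n : ℤ, f n = n • x := fun n => rfl
  -- image commutes with hfold
  have himg : ∀ (m : ℕ) (C : Finset ℤ), hfold m (C.image f) = (hfold m C).image f := by
    intro m
    induction m with
    | zero => intro C; simp [hfold, Finset.image_singleton]
    | succ n ih => intro C; simp [hfold, ih C, Finset.image_add]
  refine ⟨A.image f, ?_, ?_⟩
  · rw [Finset.card_image_of_injOn, hA]
    intro a ha b hb hab
    exact hinj a b (hbound a (Finset.mem_union_left _ ha))
      (hbound b (Finset.mem_union_left _ hb)) hab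
  · rw [himg h A, Finset.card_image_of_injOn, hAt]
    intro a ha b hb hab
    exact hinj a b (hbound a (Finset.mem_union_right _ ha))
      (hbound b (Finset.mem_union_right _ hb)) hab
end

section
/- For every k ≥ 1 and every integer t with 2k - 1 ≤ t ≤ k(k+1)/2, there exists a set A ⊆ [0, 2^k - 1] of k integers with |2A| = t. Hence the set of possible sizes of 2-fold sumsets of k-element sets of integers is exactly the interval [2k-1, k(k+1)/2]. -/
/-!
The lower bound `2k - 1` is Cauchy–Davenport for linearly ordered sets, and the upper bound counts
unordered pairs. Every size in between is realised, by induction on `k`. Adding the point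
`y = 2^(k+1) - 1` to a `k`-set inside `[0, 2^k - 1]` creates exactly `k + 1` new sums `y + a`
and `2y`, which covers the sizes `t ∈ [3k + 1, (k + 1)(k + 2)/2]`. The remaining sizes
`t ∈ [2k + 1, 3k]` come from `[0, k - 1] ∪ {x}` with `k ≤ x ≤ 2k - 1`, whose sumset is
`[0, x + k - 1] ∪ {2x}`.
-/

open Pointwise Finset

namespace Finset

theorem card_add_self_le {G : Type*} [AddCommMagma G] [DecidableEq G] (s : Finset G) :
    (s + s).card ≤ s.card * (s.card + 1) / 2 := by
  let pairSum : Sym2 G → G := Sym2.lift ⟨(· + ·), add_comm⟩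
  have hsub : s + s ⊆ s.sym2.image pairSum := by
    rintro _ hx
    obtain ⟨a, ha, b, hb, rfl⟩ := mem_add.1 hx
    exact mem_image.2 ⟨s(a, b), mk_mem_sym2_iff.2 ⟨ha, hb⟩, rfl⟩
  calc (s + s).card ≤ (s.sym2.image pairSum).card := card_le_card hsub
    _ ≤ s.sym2.card := card_image_le
    _ = s.card * (s.card + 1) / 2 := by
      rw [card_sym2, Nat.choose_two_right, Nat.add_sub_cancel, Nat.mul_comm]

theorem insert_add_insert_self {G : Type*} [AddCommMagma G] [DecidableEq G] (a : G)
    (s : Finset G) : insert a s + insert a s = insert (a + a) (s + s ∪ s.image (a + ·)) := by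
  ext x
  simp only [mem_add, mem_insert, mem_union, mem_image]
  constructor
  · rintro ⟨b, rfl | hb, c, rfl | hc, rfl⟩
    exacts [.inl rfl, .inr (.inr ⟨c, hc, rfl⟩), .inr (.inr ⟨b, hb, add_comm _ _⟩),
      .inr (.inl ⟨b, hb, c, hc, rfl⟩)]
  · rintro (rfl | ⟨b, hb, c, hc, rfl⟩ | ⟨c, hc, rfl⟩)
    exacts [⟨a, .inl rfl, a, .inl rfl, rfl⟩, ⟨b, .inr hb, c, .inr hc, rfl⟩,
      ⟨a, .inl rfl, c, .inr hc, rfl⟩]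

end Finset

theorem Int.Icc_add_Icc {a b c d : ℤ} (hab : a ≤ b) (hcd : c ≤ d) :
    Icc a b + Icc c d = Icc (a + c) (b + d) := by
  refine (Icc_add_Icc_subset a b c d).antisymm fun z hz => ?_
  rw [mem_Icc] at hz
  exact mem_add.2 ⟨max a (z - d), mem_Icc.2 ⟨le_max_left _ _, by omega⟩,
    z - max a (z - d), mem_Icc.2 ⟨by omega, by omega⟩, by ring⟩

theorem Int.card_insert_Icc_add_self {m x : ℤ} (hm : 0 ≤ m) (hmx : m < x) (hx : x ≤ 2 * m + 1) :
    ((insert x (Icc 0 m) + insert x (Icc 0 m)).card : ℤ) = x + m + 2 := by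
  have hunion : Icc 0 m + Icc 0 m ∪ (Icc 0 m).image (x + ·) = Icc 0 (x + m) := by
    rw [Int.Icc_add_Icc hm hm, image_add_left_Icc]
    ext; simp only [mem_union, mem_Icc]; omega
  rw [insert_add_insert_self, hunion, card_insert_of_notMem (by rw [mem_Icc]; omega), Int.card_Icc]
  omega

theorem Int.card_insert_add_self_of_forall_lt {s : Finset ℤ} {y : ℤ}
    (hs : ∀ a ∈ s, 0 ≤ a ∧ 2 * a < y) :
    (insert y s + insert y s).card = (s + s).card + s.card + 1 := by
  have hdisj : Disjoint (s + s) (s.image (y + ·)) := by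
    rw [disjoint_left]
    rintro _ hab hc
    obtain ⟨a, ha, b, hb, rfl⟩ := mem_add.1 hab
    obtain ⟨c, hc, hcab⟩ := mem_image.1 hc
    have := hs a ha; have := hs b hb; have := hs c hc
    omega
  have hnotMem : y + y ∉ s + s ∪ s.image (y + ·) := by
    simp only [mem_union, mem_add, mem_image, not_or, not_exists, not_and]
    refine ⟨fun a ha b hb hab => ?_, fun a ha hay => ?_⟩
    · have := hs a ha; have := hs b hb; omega
    · have := hs a ha; omega
  rw [insert_add_insert_self, card_insert_of_notMem hnotMem, card_union_of_disjoint hdisj,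
    card_image_of_injective _ (add_right_injective y)]

theorem exists_card_add_self_eq_of_le_three_mul {k t : ℕ} (ht₁ : 2 * k + 1 ≤ t)
    (ht₂ : t ≤ 3 * k) : ∃ A : Finset ℤ,
      A ⊆ Icc 0 (2 ^ (k + 1) - 1) ∧ A.card = k + 1 ∧ (A + A).card = t := by
  have hk_lt : (k : ℤ) < 2 ^ k := by exact_mod_cast k.lt_two_pow_self
  set x : ℤ := t - k - 1
  refine ⟨insert x (Icc 0 (k - 1)), ?_, ?_, ?_⟩
  · rw [insert_subset_iff, Icc_subset_Icc_iff (by omega), mem_Icc, pow_succ]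
    omega
  · rw [card_insert_of_notMem (by rw [mem_Icc]; omega), Int.card_Icc]
    omega
  · have := Int.card_insert_Icc_add_self (m := k - 1) (x := x) (by omega) (by omega) (by omega)
    omega

theorem exists_card_add_self_eq (k : ℕ) (hk : 1 ≤ k) (t : ℕ) (ht₁ : 2 * k - 1 ≤ t)
    (ht₂ : t ≤ k * (k + 1) / 2) :
    ∃ A : Finset ℤ, A ⊆ Icc 0 (2 ^ k - 1) ∧ A.card = k ∧ (A + A).card = t := by
  induction k, hk using Nat.le_induction generalizing t with
  | base => exact ⟨{0}, by simp, rfl, by simp; omega⟩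
  | succ k hk ih =>
    rcases le_or_gt t (3 * k) with hsmall | hlarge
    · exact exists_card_add_self_eq_of_le_three_mul (by omega) hsmall
    have htriangle : k * (k + 1) / 2 + (k + 1) = (k + 1) * (k + 1 + 1) / 2 := by
      rw [← Nat.add_mul_div_left _ _ two_pos]; ring_nf
    obtain ⟨A, hA, hcard, hsum⟩ := ih (t - (k + 1)) (by omega) (by omega)
    have hbound : ∀ a ∈ A, 0 ≤ a ∧ 2 * a < 2 ^ (k + 1) - 1 := fun a ha => by
      have := mem_Icc.1 (hA ha); rw [pow_succ]; omega
    refine ⟨insert (2 ^ (k + 1) - 1) A, ?_, ?_, ?_⟩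
    · rw [insert_subset_iff, mem_Icc]
      refine ⟨⟨sub_nonneg.2 (one_le_pow₀ one_le_two), le_rfl⟩, fun a ha => mem_Icc.2 ?_⟩
      have := hbound a ha; omega
    · rw [card_insert_of_notMem fun h => by have := hbound _ h; omega, hcard]
    · rw [Int.card_insert_add_self_of_forall_lt hbound, hsum, hcard]
      omega

theorem stmt11 (k : ℕ) (hk : 1 ≤ k) :
    (∀ t : ℕ, 2 * k - 1 ≤ t → t ≤ k * (k + 1) / 2 →
      ∃ A : Finset ℤ, A ⊆ Finset.Icc 0 (2 ^ k - 1) ∧ A.card = k ∧ (A + A).card = t) ∧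
    {t : ℕ | ∃ A : Finset ℤ, A.card = k ∧ (A + A).card = t}
      = Set.Icc (2 * k - 1) (k * (k + 1) / 2) := by
  refine ⟨exists_card_add_self_eq k hk, Set.ext fun t => ⟨?_, fun ⟨ht₁, ht₂⟩ => ?_⟩⟩
  · rintro ⟨A, hcard, rfl⟩
    have hA : A.Nonempty := card_pos.1 (by omega)
    have := cauchy_davenport_add_of_linearOrder_isCancelAdd hA hA
    exact ⟨by omega, hcard ▸ card_add_self_le A⟩
  · obtain ⟨A, -, hcard, hsum⟩ := exists_card_add_self_eq k hk t ht₁ ht₂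
    exact ⟨A, hcard, hsum⟩
end

section
/- For every k ≥ 2 and every integer t with 2k - 3 ≤ t ≤ k(k-1)/2, there exists a set A ⊆ [0, 2^{k-2}] of k integers with |2ˆA| = t, where 2ˆA is the set of sums of two distinct elements of A. Hence the set of possible sizes of 2-fold restricted sumsets of k-element sets of integers is exactly [2k-3, k(k-1)/2]. -/
/-!
Counting pairs gives `|2ˆA| ≤ k(k-1)/2`; the sums `min A + b` (`b ≠ min A`) and `a + max A`
(`min A < a < max A`) are `2k - 3` distinct elements of `2ˆA`.

Conversely, for `k - 1 ≤ x ≤ 2k - 4` the set `[0, k - 2] ∪ {x}` has `2ˆA = [1, x + k - 2]`, which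
realises every size in `[2k - 3, 3k - 6]`. Adjoining `2^(k-1)` to a `k`-set inside `[0, 2^(k-2)]`
adds exactly `k` new sums, all above the old ones; since `(k+1)k/2 = k(k-1)/2 + k`, induction on `k`
reaches the remaining sizes `(3k - 6, k(k-1)/2]`.
-/

open Pointwise Finset

section

variable {G : Type*} [AddCommMonoid G] [DecidableEq G]

theorem mem_rfold_two {A : Finset G} {c : G} :
    c ∈ rfold 2 A ↔ ∃ a ∈ A, ∃ b ∈ A, a ≠ b ∧ a + b = c := by
  simp only [rfold, mem_image, mem_powersetCard, card_eq_two]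
  constructor
  · rintro ⟨S, ⟨hS, a, b, hab, rfl⟩, rfl⟩
    exact ⟨a, hS (by simp), b, hS (by simp), hab, by simp [sum_pair hab]⟩
  · rintro ⟨a, ha, b, hb, hab, rfl⟩
    exact ⟨{a, b}, ⟨insert_subset ha (singleton_subset_iff.mpr hb), a, b, hab, rfl⟩,
      by simp [sum_pair hab]⟩

theorem card_rfold_two_le (A : Finset G) : #(rfold 2 A) ≤ #A * (#A - 1) / 2 :=
  calc #(rfold 2 A) ≤ #(A.powersetCard 2) := card_image_le
    _ = #A * (#A - 1) / 2 := by rw [card_powersetCard, Nat.choose_two_right]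

theorem rfold_two_insert {A : Finset G} {c : G} (hc : c ∉ A) :
    rfold 2 (insert c A) = rfold 2 A ∪ A.image (c + ·) := by
  ext s
  simp only [mem_union, mem_rfold_two, mem_insert, mem_image]
  constructor
  · rintro ⟨a, rfl | ha, b, rfl | hb, hab, rfl⟩
    · exact absurd rfl hab
    · exact Or.inr ⟨b, hb, rfl⟩
    · exact Or.inr ⟨a, ha, add_comm _ _⟩
    · exact Or.inl ⟨a, ha, b, hb, hab, rfl⟩
  · rintro (⟨a, ha, b, hb, hab, rfl⟩ | ⟨a, ha, rfl⟩)
    · exact ⟨a, Or.inr ha, b, Or.inr hb, hab, rfl⟩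
    · exact ⟨c, Or.inl rfl, a, Or.inr ha, fun h => hc (h ▸ ha), rfl⟩

end

theorem le_card_rfold_two {G : Type*} [AddCommMonoid G] [LinearOrder G]
    [IsOrderedCancelAddMonoid G] [DecidableEq G] {A : Finset G} (hA : 2 ≤ #A) :
    2 * #A - 3 ≤ #(rfold 2 A) := by
  have hne : A.Nonempty := card_pos.mp (by omega)
  set m := A.min' hne
  set M := A.max' hne
  have hmM : m < M := A.min'_lt_max'_of_card (by omega)
  have hm : m ∈ A := A.min'_mem hne
  have hM : M ∈ (A.erase m) := mem_erase.mpr ⟨hmM.ne', A.max'_mem hne⟩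
  set S₁ := (A.erase m).image (m + ·)
  set S₂ := ((A.erase m).erase M).image (· + M)
  have hS₁ : #S₁ = #A - 1 := by
    rw [card_image_of_injective _ (add_right_injective m), card_erase_of_mem hm]
  have hS₂ : #S₂ = #A - 2 := by
    rw [card_image_of_injective _ (add_left_injective M), card_erase_of_mem hM,
      card_erase_of_mem hm, Nat.sub_sub]
  have hsub : S₁ ∪ S₂ ⊆ rfold 2 A := by
    simp only [S₁, S₂, union_subset_iff, image_subset_iff, mem_erase, mem_rfold_two]
    refine ⟨fun b ⟨hbm, hb⟩ => ⟨m, hm, b, hb, hbm.symm, rfl⟩,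
      fun a ⟨haM, _, ha⟩ => ⟨a, ha, M, (mem_erase.mp hM).2, haM, rfl⟩⟩
  have hdisj : Disjoint S₁ S₂ := by
    simp only [S₁, S₂, disjoint_left, mem_image, mem_erase]
    rintro _ ⟨b, ⟨-, hb⟩, rfl⟩ ⟨a, ⟨-, ham, ha⟩, hab⟩
    have : m + b < a + M :=
      add_lt_add_of_lt_of_le (lt_of_le_of_ne (A.min'_le a ha) (Ne.symm ham)) (A.le_max' b hb)
    exact this.ne' hab
  calc 2 * #A - 3 = (#A - 1) + (#A - 2) := by omega
    _ = #(S₁ ∪ S₂) := by rw [card_union_of_disjoint hdisj, hS₁, hS₂]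
    _ ≤ #(rfold 2 A) := card_le_card hsub

theorem rfold_two_Icc_zero (n : ℤ) : rfold 2 (Icc 0 n) = Icc 1 (2 * n - 1) := by
  ext c
  simp only [mem_rfold_two, mem_Icc]
  constructor
  · rintro ⟨a, ha, b, hb, hab, rfl⟩
    omega
  · intro hc
    by_cases hcn : c ≤ n
    · exact ⟨0, by omega, c, by omega, by omega, zero_add c⟩
    · exact ⟨c - n, by omega, n, by omega, by omega, sub_add_cancel c n⟩

theorem rfold_two_insert_Icc_zero {n x : ℤ} (hnx : n < x) (hx : x ≤ 2 * n) :
    rfold 2 (insert x (Icc 0 n)) = Icc 1 (x + n) := by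
  rw [rfold_two_insert (by simp; omega), rfold_two_Icc_zero, image_add_left_Icc, add_zero]
  ext c
  simp only [mem_union, mem_Icc]
  omega

theorem card_rfold_two_insert {A : Finset ℤ} {c : ℤ} (hc : 0 < c)
    (hA : ∀ a ∈ A, 0 ≤ a ∧ 2 * a ≤ c) :
    #(rfold 2 (insert c A)) = #(rfold 2 A) + #A := by
  have hcA : c ∉ A := fun h => by have := hA c h; omega
  have hdisj : Disjoint (rfold 2 A) (A.image (c + ·)) := by
    simp only [disjoint_left, mem_rfold_two, mem_image]
    rintro _ ⟨a, ha, b, hb, hab, rfl⟩ ⟨d, hd, hdab⟩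
    have := hA a ha; have := hA b hb; have := hA d hd
    omega
  rw [rfold_two_insert hcA, card_union_of_disjoint hdisj,
    card_image_of_injective _ (add_right_injective c)]

theorem two_mul_le_two_pow (n : ℕ) : 2 * n ≤ 2 ^ n := by
  cases n with
  | zero => norm_num
  | succ n => rw [pow_succ]; have := n.lt_two_pow_self; omega

theorem exists_card_rfold_two_eq_of_le_three_mul {k t : ℕ} (hk : 3 ≤ k) (ht : 2 * k - 3 ≤ t)
    (ht' : t ≤ 3 * k - 6) :
    ∃ A : Finset ℤ, A ⊆ Icc 0 (2 ^ (k - 2)) ∧ #A = k ∧ #(rfold 2 A) = t := by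
  obtain ⟨n, rfl⟩ : ∃ n, k = n + 2 := ⟨k - 2, by omega⟩
  rw [Nat.add_sub_cancel]
  have hx : (n : ℤ) < t - n ∧ (t : ℤ) - n ≤ 2 * n := by omega
  have hpow : (2 * n : ℤ) ≤ 2 ^ n := by exact_mod_cast two_mul_le_two_pow n
  refine ⟨insert ((t : ℤ) - n) (Icc 0 n), ?_, ?_, ?_⟩
  · exact insert_subset (by simp only [mem_Icc]; omega) (Icc_subset_Icc le_rfl (by omega))
  · rw [card_insert_of_notMem (by simp only [mem_Icc]; omega), Int.card_Icc]
    omega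
  · rw [rfold_two_insert_Icc_zero hx.1 hx.2, Int.card_Icc]
    omega

theorem exists_insert_card_rfold_two {k : ℕ} (hk : 2 ≤ k) {A : Finset ℤ}
    (hA : A ⊆ Icc 0 (2 ^ (k - 2))) :
    ∃ B : Finset ℤ, B ⊆ Icc 0 (2 ^ (k - 1)) ∧ #B = #A + 1 ∧
      #(rfold 2 B) = #(rfold 2 A) + #A := by
  obtain ⟨n, rfl⟩ : ∃ n, k = n + 2 := ⟨k - 2, by omega⟩
  rw [Nat.add_sub_cancel] at hA
  rw [show n + 2 - 1 = n + 1 by omega, pow_succ]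
  have hbound : ∀ a ∈ A, 0 ≤ a ∧ a ≤ 2 ^ n := fun a ha => mem_Icc.mp (hA ha)
  have hpos : (0 : ℤ) < 2 ^ n := by positivity
  refine ⟨insert (2 ^ n * 2) A, ?_, card_insert_of_notMem ?_, card_rfold_two_insert ?_ ?_⟩
  · exact insert_subset (mem_Icc.mpr ⟨by omega, le_rfl⟩)
      (hA.trans (Icc_subset_Icc le_rfl (by omega)))
  · exact fun h => by have := hbound _ h; omega
  · omega
  · exact fun a ha => by have := hbound a ha; omega

theorem exists_card_rfold_two_eq {k : ℕ} (hk : 2 ≤ k) {t : ℕ} (ht : 2 * k - 3 ≤ t)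
    (ht' : t ≤ k * (k - 1) / 2) :
    ∃ A : Finset ℤ, A ⊆ Icc 0 (2 ^ (k - 2)) ∧ #A = k ∧ #(rfold 2 A) = t := by
  induction k, hk using Nat.le_induction generalizing t with
  | base =>
    obtain rfl : t = 1 := by omega
    exact ⟨{0, 1}, by decide, rfl, by decide⟩
  | succ k hk ih =>
    by_cases hlow : t ≤ 3 * (k + 1) - 6
    · exact exists_card_rfold_two_eq_of_le_three_mul (by omega) ht hlow
    have hpascal : (k + 1) * (k + 1 - 1) / 2 = k * (k - 1) / 2 + k := by
      rw [← Nat.choose_two_right, ← Nat.choose_two_right, Nat.choose_succ_succ',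
        Nat.choose_one_right, add_comm]
    obtain ⟨A, hA, rfl, hAt⟩ := ih (t := t - k) (by omega) (by omega)
    obtain ⟨B, hB, hBk, hBt⟩ := exists_insert_card_rfold_two hk hA
    exact ⟨B, hB, hBk, by omega⟩

theorem stmt12 (k : ℕ) (hk : 2 ≤ k) :
    (∀ t : ℕ, 2 * k - 3 ≤ t → t ≤ k * (k - 1) / 2 →
      ∃ A : Finset ℤ, A ⊆ Finset.Icc 0 (2 ^ (k - 2)) ∧ A.card = k ∧ (rfold 2 A).card = t) ∧
    {t : ℕ | ∃ A : Finset ℤ, A.card = k ∧ (rfold 2 A).card = t}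
      = Set.Icc (2 * k - 3) (k * (k - 1) / 2) := by
  refine ⟨fun t => exists_card_rfold_two_eq hk, Set.ext fun t => ⟨?_, ?_⟩⟩
  · rintro ⟨A, rfl, rfl⟩
    exact ⟨le_card_rfold_two hk, card_rfold_two_le A⟩
  · rintro ⟨ht, ht'⟩
    obtain ⟨A, -, hA⟩ := exists_card_rfold_two_eq hk ht ht'
    exact ⟨A, hA⟩
end

section
/- For all h ≥ 3 and k ≥ 3, there is no set A of k integers with |hA| = hk - h + 2. In particular, the set {|hA| : A ⊆ ℤ, |A| = k} is not an interval of consecutive integers. -/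
open Pointwise Finset

/-- Enumeration of a finite set of integers in increasing order, clipped to 0 outside. -/
noncomputable def enum (A : Finset ℤ) (t : ℕ) : ℤ :=
  if ht : t < A.card then (A.orderIsoOfFin rfl ⟨t, ht⟩ : ℤ) else 0

lemma enum_mem (A : Finset ℤ) {t : ℕ} (ht : t < A.card) : enum A t ∈ A := by
  rw [enum, dif_pos ht]
  exact (A.orderIsoOfFin rfl ⟨t, ht⟩).2

lemma enum_lt (A : Finset ℤ) {s t : ℕ} (hst : s < t) (ht : t < A.card) :
    enum A s < enum A t := by
  have hs : s < A.card := lt_trans hst ht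
  rw [enum, dif_pos hs, enum, dif_pos ht]
  exact_mod_cast (A.orderIsoOfFin rfl).strictMono (show (⟨s, hs⟩ : Fin A.card) < ⟨t, ht⟩ from hst)

lemma enum_le (A : Finset ℤ) {s t : ℕ} (hst : s ≤ t) (ht : t < A.card) :
    enum A s ≤ enum A t := by
  rcases eq_or_lt_of_le hst with rfl | h
  · exact le_refl _
  · exact le_of_lt (enum_lt A h ht)

lemma enum_inj (A : Finset ℤ) {s t : ℕ} (hs : s < A.card) (ht : t < A.card)
    (h : enum A s = enum A t) : s = t := by
  rcases lt_trichotomy s t with hlt | he | hgt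
  · exact absurd h (ne_of_lt (enum_lt A hlt ht))
  · exact he
  · exact absurd h.symm (ne_of_lt (enum_lt A hgt hs))

lemma enum_surj (A : Finset ℤ) {x : ℤ} (hx : x ∈ A) :
    ∃ t, t < A.card ∧ enum A t = x := by
  obtain ⟨t, ht⟩ := (A.orderIsoOfFin rfl).surjective ⟨x, hx⟩
  refine ⟨t.1, t.2, ?_⟩
  rw [enum, dif_pos t.2]
  simp only [Fin.eta, ht]

/-- Key lemma: if `|A+B| < |A| + |B|` then all gaps of `A` equal `enum B 1 - enum B 0`. -/
lemma key (A B : Finset ℤ) (hA : 2 ≤ A.card) (hB : 2 ≤ B.card)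
    (hle : (A + B).card < A.card + B.card) :
    ∀ i, i + 1 < A.card → enum A (i + 1) - enum A i = enum B 1 - enum B 0 := by
  intro i hi
  by_contra hne
  set m := A.card with hm
  set n := B.card with hn
  have hne' : enum B 0 + enum A (i + 1) ≠ enum B 1 + enum A i := by
    intro h; apply hne; linarith
  have hb01 : enum B 0 < enum B 1 := enum_lt B (by omega) (by omega)
  set S1 : Finset ℤ := (Finset.range (i + 2)).image (fun t => enum B 0 + enum A t) with hS1
  set S2 : Finset ℤ := (Finset.Icc i (m - 1)).image (fun t => enum B 1 + enum A t) with hS2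
  set S3 : Finset ℤ := (Finset.Icc 2 (n - 1)).image (fun j => enum B j + enum A (m - 1)) with hS3
  have hm1 : m - 1 < m := by omega
  -- cards
  have c1 : S1.card = i + 2 := by
    rw [hS1, Finset.card_image_of_injOn, Finset.card_range]
    intro s hs t ht hst
    simp only [Finset.coe_range, Set.mem_Iio] at hs ht
    have hst' : enum B 0 + enum A s = enum B 0 + enum A t := hst
    exact enum_inj A (by omega) (by omega) (by linarith)
  have c2 : S2.card = m - i := by
    rw [hS2, Finset.card_image_of_injOn, Nat.card_Icc]
    · omega
    · intro s hs t ht hst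
      simp only [Finset.coe_Icc, Set.mem_Icc] at hs ht
      have hst' : enum B 1 + enum A s = enum B 1 + enum A t := hst
      exact enum_inj A (by omega) (by omega) (by linarith)
  have c3 : S3.card = n - 2 := by
    rw [hS3, Finset.card_image_of_injOn, Nat.card_Icc]
    · omega
    · intro s hs t ht hst
      simp only [Finset.coe_Icc, Set.mem_Icc] at hs ht
      have hst' : enum B s + enum A (m - 1) = enum B t + enum A (m - 1) := hst
      exact enum_inj B (by omega) (by omega) (by linarith)
  -- subsets
  have sub1 : S1 ⊆ A + B := by
    intro x hx
    simp only [hS1, Finset.mem_image, Finset.mem_range] at hx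
    obtain ⟨t, ht, rfl⟩ := hx
    exact Finset.mem_add.2 ⟨enum A t, enum_mem A (by omega), enum B 0, enum_mem B (by omega),
      by ring⟩
  have sub2 : S2 ⊆ A + B := by
    intro x hx
    simp only [hS2, Finset.mem_image, Finset.mem_Icc] at hx
    obtain ⟨t, ht, rfl⟩ := hx
    exact Finset.mem_add.2 ⟨enum A t, enum_mem A (by omega), enum B 1, enum_mem B (by omega),
      by ring⟩
  have sub3 : S3 ⊆ A + B := by
    intro x hx
    simp only [hS3, Finset.mem_image, Finset.mem_Icc] at hx
    obtain ⟨j, hj, rfl⟩ := hx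
    exact Finset.mem_add.2 ⟨enum A (m - 1), enum_mem A (by omega), enum B j,
      enum_mem B (by omega), by ring⟩
  -- disjointness
  have d12 : Disjoint S1 S2 := by
    rw [Finset.disjoint_left]
    intro x hx1 hx2
    simp only [hS1, Finset.mem_image, Finset.mem_range] at hx1
    simp only [hS2, Finset.mem_image, Finset.mem_Icc] at hx2
    obtain ⟨s, hs, rfl⟩ := hx1
    obtain ⟨t, ht, hEq⟩ := hx2
    have hst : enum A s - enum A t = enum B 1 - enum B 0 := by linarith
    have hpos : enum A t < enum A s := by linarith
    have hts : t < s := by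
      by_contra hc
      exact absurd (enum_le A (by omega) (by omega)) (not_le.2 hpos)
    have : t = i ∧ s = i + 1 := by omega
    obtain ⟨rfl, rfl⟩ := this
    exact hne' (by linarith)
  have d123 : Disjoint (S1 ∪ S2) S3 := by
    rw [Finset.disjoint_left]
    intro x hx hx3
    simp only [hS3, Finset.mem_image, Finset.mem_Icc] at hx3
    obtain ⟨j, hj, hEq⟩ := hx3
    have hbj : enum B 1 < enum B j := enum_lt B (by omega) (by omega)
    rcases Finset.mem_union.1 hx with hx1 | hx2
    · simp only [hS1, Finset.mem_image, Finset.mem_range] at hx1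
      obtain ⟨s, hs, rfl⟩ := hx1
      have h1 : enum A s ≤ enum A (m - 1) := enum_le A (by omega) hm1
      have h2 : enum B 0 < enum B j := lt_trans hb01 hbj
      linarith
    · simp only [hS2, Finset.mem_image, Finset.mem_Icc] at hx2
      obtain ⟨t, ht, rfl⟩ := hx2
      have h1 : enum A t ≤ enum A (m - 1) := enum_le A (by omega) hm1
      linarith
  have hsub : S1 ∪ S2 ∪ S3 ⊆ A + B := by
    intro x hx
    rcases Finset.mem_union.1 hx with hx | hx3
    · rcases Finset.mem_union.1 hx with hx1 | hx2
      · exact sub1 hx1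
      · exact sub2 hx2
    · exact sub3 hx3
  have hcard : (S1 ∪ S2 ∪ S3).card = m + n := by
    rw [Finset.card_union_of_disjoint d123, Finset.card_union_of_disjoint d12, c1, c2, c3]
    omega
  have := Finset.card_le_card hsub
  omega

lemma image_add_image (p q : ℕ) (c1 c2 d : ℤ) (hp : 1 ≤ p) (hq : 1 ≤ q) :
    (Finset.range p).image (fun i : ℕ => c1 + i * d) +
      (Finset.range q).image (fun j : ℕ => c2 + j * d) =
      (Finset.range (p + q - 1)).image (fun t : ℕ => (c1 + c2) + t * d) := by
  ext x
  simp only [Finset.mem_add, Finset.mem_image, Finset.mem_range]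
  constructor
  · rintro ⟨y, ⟨i, hi, rfl⟩, z, ⟨j, hj, rfl⟩, rfl⟩
    exact ⟨i + j, by omega, by push_cast; ring⟩
  · rintro ⟨t, ht, rfl⟩
    refine ⟨c1 + ((min t (p - 1) : ℕ) : ℤ) * d, ⟨min t (p - 1), by omega, rfl⟩,
      c2 + ((t - min t (p - 1) : ℕ) : ℤ) * d, ⟨t - min t (p - 1), by omega, rfl⟩, ?_⟩
    have h : min t (p - 1) + (t - min t (p - 1)) = t := by omega
    have hz : ((min t (p - 1) : ℕ) : ℤ) + ((t - min t (p - 1) : ℕ) : ℤ) = (t : ℤ) := by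
      exact_mod_cast congrArg (Nat.cast : ℕ → ℤ) h
    linear_combination hz * d
  
lemma hfold_ap (h k : ℕ) (x d : ℤ) (hk : 1 ≤ k) :
    hfold h ((Finset.range k).image (fun i : ℕ => x + i * d)) =
      (Finset.range (h * (k - 1) + 1)).image (fun i : ℕ => h * x + i * d) := by
  induction h with
  | zero =>
      simp [hfold]
  | succ n ih =>
      rw [hfold, ih, image_add_image _ _ _ _ _ (by omega) hk]
      have he : n * (k - 1) + 1 + k - 1 = (n + 1) * (k - 1) + 1 := by
        rw [Nat.succ_mul]; omega
      rw [he]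
      congr 1
      ext i
      push_cast
      ring

theorem stmt13 (h k : ℕ) (hh : 3 ≤ h) (hk : 3 ≤ k) :
    ¬ ∃ A : Finset ℤ, A.card = k ∧ (hfold h A).card = h * k - h + 2 := by
  rintro ⟨A, hAk, hcard⟩
  have hk2 : 2 ≤ A.card := by omega
  by_cases hap : ∀ i, i + 1 < A.card → enum A (i + 1) - enum A i = enum A 1 - enum A 0
  · -- A is an AP
    set d : ℤ := enum A 1 - enum A 0 with hd
    have hd0 : 0 < d := by
      have := enum_lt A (show 0 < 1 by omega) (by omega)
      omega
    have hval : ∀ t, t < A.card → enum A t = enum A 0 + t * d := by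
      intro t
      induction t with
      | zero => intro _; simp
      | succ s ih =>
          intro hs
          have h1 := hap s hs
          have h2 := ih (by omega)
          push_cast
          linarith
    have hAeq : A = (Finset.range A.card).image (fun i : ℕ => enum A 0 + i * d) := by
      ext y
      simp only [Finset.mem_image, Finset.mem_range]
      constructor
      · intro hy
        obtain ⟨t, ht, hte⟩ := enum_surj A hy
        exact ⟨t, ht, by rw [← hval t ht, hte]⟩
      · rintro ⟨t, ht, rfl⟩
        rw [← hval t ht]
        exact enum_mem A ht
    have hAeq' : A = (Finset.range k).image (fun i : ℕ => enum A 0 + i * d) := by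
      rw [← hAk]; exact hAeq
    have hcard2 : (hfold h A).card = h * (k - 1) + 1 := by
      conv_lhs => rw [hAeq']
      rw [hfold_ap h k _ d (by omega)]
      rw [Finset.card_image_of_injOn, Finset.card_range]
      intro s _ t _ hst
      have hst' : h * enum A 0 + (s : ℤ) * d = h * enum A 0 + (t : ℤ) * d := hst
      have h1 : (s : ℤ) * d = t * d := by linarith
      have h2 := mul_right_cancel₀ (ne_of_gt hd0) h1
      exact_mod_cast h2
    obtain ⟨k', rfl⟩ : ∃ k', k = k' + 1 := ⟨k - 1, by omega⟩
    rw [hcard2] at hcard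
    simp only [Nat.add_sub_cancel] at hcard
    have he : h * (k' + 1) = h * k' + h := by ring
    omega
  · -- A is not an AP
    push_neg at hap
    have hkey : ∀ j, 2 ≤ j → j * A.card ≤ (hfold j A).card := by
      intro j hj
      induction j with
      | zero => omega
      | succ n ih =>
          have hstep : ∀ B : Finset ℤ, 2 ≤ B.card → B.card + A.card ≤ (B + A).card := by
            intro B hB
            by_contra hc
            push_neg at hc
            obtain ⟨i, hi, hne⟩ := hap
            have := key A B hk2 hB (by rw [add_comm A B]; omega)
            have h1 := this i hi
            have h0 := this 0 (by omega)
            norm_num at h0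
            exact hne (h1.trans h0.symm)
          rcases Nat.lt_or_ge n 2 with hn2 | hn2
          · -- n + 1 = 2, i.e. n = 1
            have hn1 : n = 1 := by omega
            subst hn1
            have h1A : hfold 1 A = A := by
              show hfold 0 A + A = A
              show {0} + A = A
              simp [Finset.singleton_add]
            have h2 : hfold 2 A = A + A := by
              show hfold 1 A + A = A + A
              rw [h1A]
            rw [h2]
            have := hstep A hk2
            omega
          · have ihn := ih hn2
            have hBc : 2 ≤ (hfold n A).card := by
              have : 2 ≤ n * A.card := by
                calc 2 ≤ n := hn2
                _ = n * 1 := by ring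
                _ ≤ n * A.card := Nat.mul_le_mul_left n (by omega)
              omega
            have hst := hstep (hfold n A) hBc
            show (n + 1) * A.card ≤ (hfold n A + A).card
            have hsm : (n + 1) * A.card = n * A.card + A.card := Nat.succ_mul n A.card
            omega
    have := hkey h (by omega)
    rw [hAk] at this
    have h3k : 3 * h ≤ h * k := by
      calc 3 * h = h * 3 := by ring
      _ ≤ h * k := Nat.mul_le_mul_left h hk
    omega
end

section
/- For h ≥ 3 and a finite set A of k ≥ 3 integers, |hA| = hk - h + 1 if and only if A is an arithmetic progression of length k. -/
/-!
By Cauchy–Davenport, `|B + A| ≥ |B| + |A| - 1` for nonempty finite sets in a linearly ordered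
group, so `|hA| ≥ |2A| + (h - 2)(k - 1) ≥ h(k - 1) + 1`, and equality forces `|A + A| = 2k - 1`.
For `A = {a₀ < ⋯ < a_{k-1}}` the increasing chains `a₀ + a₀ < a₀ + a₁ < a₁ + a₁ < a₁ + a₂ < ⋯`
and `a₀ + a₀ < a₀ + a₁ < ⋯ < a₀ + a_{k-1} < a₁ + a_{k-1} < ⋯ < a_{k-1} + a_{k-1}` then both
enumerate `A + A` in order, so `a_t + a₀ = a_{⌊t/2⌋} + a_{⌈t/2⌉}`, and strong induction on `t`
gives `a_t = a₀ + t (a₁ - a₀)`. Conversely, the `h`-fold sumset of a `k`-term progression with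
difference `d` is the `(h(k - 1) + 1)`-term progression with difference `d`.
-/

open Pointwise Finset

def arithProg {α : Type*} [AddCommMonoid α] [DecidableEq α] (a d : α) (k : ℕ) : Finset α :=
  (range k).image fun i => a + i • d

section AddCommMonoid

variable {α : Type*} [AddCommMonoid α] [DecidableEq α]

lemma hfold_zero (A : Finset α) : hfold 0 A = {0} := rfl

lemma hfold_succ (n : ℕ) (A : Finset α) : hfold (n + 1) A = hfold n A + A := rfl

lemma hfold_two (A : Finset α) : hfold 2 A = A + A := by
  rw [hfold_succ, hfold_succ, hfold_zero, singleton_zero, zero_add]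

lemma hfold_nonempty {A : Finset α} (hA : A.Nonempty) (n : ℕ) : (hfold n A).Nonempty := by
  induction n with
  | zero => exact singleton_nonempty 0
  | succ n ih => exact ih.add hA

lemma arithProg_add_arithProg (a b d : α) {m k : ℕ} (hm : 0 < m) (hk : 0 < k) :
    arithProg a d m + arithProg b d k = arithProg (a + b) d (m + k - 1) := by
  ext x
  simp only [arithProg, mem_add, mem_image, mem_range]
  constructor
  · rintro ⟨_, ⟨i, hi, rfl⟩, _, ⟨j, hj, rfl⟩, rfl⟩
    exact ⟨i + j, by omega, by rw [add_nsmul]; abel⟩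
  · rintro ⟨l, hl, rfl⟩
    refine ⟨_, ⟨min l (m - 1), by omega, rfl⟩, _, ⟨l - min l (m - 1), by omega, rfl⟩, ?_⟩
    rw [add_add_add_comm, ← add_nsmul, Nat.add_sub_cancel' (min_le_left _ _)]

lemma hfold_arithProg (a d : α) {k : ℕ} (hk : 0 < k) (n : ℕ) :
    hfold n (arithProg a d k) = arithProg (n • a) d (n * (k - 1) + 1) := by
  induction n with
  | zero => simp [hfold_zero, arithProg]
  | succ n ih =>
    rw [hfold_succ, ih, arithProg_add_arithProg _ _ _ (Nat.succ_pos _) hk, succ_nsmul]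
    congr 1
    rw [Nat.add_one_mul]
    omega

end AddCommMonoid

section AddCommGroup

variable {α : Type*} [AddCommGroup α]

lemma eq_add_nsmul_of_add_eq_add_half {a : ℕ → α} {n : ℕ}
    (h : ∀ t ≤ n, a t + a 0 = a (t / 2) + a ((t + 1) / 2)) :
    ∀ t ≤ n, a t = a 0 + t • (a 1 - a 0) := by
  intro t
  induction t using Nat.strong_induction_on with
  | _ t ih =>
    intro ht
    match t with
    | 0 => simp
    | 1 => simp
    | t + 2 =>
      have hhalf := h (t + 2) ht
      rw [ih ((t + 2) / 2) (by omega) (by omega), ih ((t + 2 + 1) / 2) (by omega) (by omega)]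
        at hhalf
      calc a (t + 2) = a 0 + ((t + 2) / 2 + (t + 2 + 1) / 2) • (a 1 - a 0) := by
            rw [add_nsmul, eq_sub_of_add_eq hhalf]; abel
        _ = a 0 + (t + 2) • (a 1 - a 0) := by congr 2; omega

end AddCommGroup

section LinearOrder

variable {β : Type*} [LinearOrder β]

lemma exists_strictMonoOn_Iic_image_range_eq [DecidableEq β] (A : Finset β) {n : ℕ}
    (hA : #A = n + 1) : ∃ a : ℕ → β, StrictMonoOn a (Set.Iic n) ∧ (range (n + 1)).image a = A := by
  have ha : StrictMonoOn (fun i => A.orderEmbOfFin hA ⟨min i n, by omega⟩) (Set.Iic n) :=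
    fun i _ j (hj : j ≤ n) hij => (A.orderEmbOfFin hA).strictMono (Fin.mk_lt_mk.2 (by omega))
  refine ⟨_, ha, eq_of_subset_of_card_le ?_ ?_⟩
  · exact image_subset_iff.2 fun i _ => orderEmbOfFin_mem A hA _
  · have hrange : (range (n + 1) : Set ℕ) ⊆ Set.Iic n :=
      fun i hi => Nat.le_of_lt_succ (mem_range.1 hi)
    rw [card_image_of_injOn (ha.injOn.mono hrange), card_range, hA]

lemma eqOn_Iic_of_strictMonoOn_of_mapsTo {s : Finset β} {n : ℕ} (hs : #s = n + 1) {f g : ℕ → β}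
    (hf : StrictMonoOn f (Set.Iic n)) (hg : StrictMonoOn g (Set.Iic n))
    (hfs : Set.MapsTo f (Set.Iic n) s) (hgs : Set.MapsTo g (Set.Iic n) s) :
    Set.EqOn f g (Set.Iic n) := by
  have sorted : ∀ φ : ℕ → β, StrictMonoOn φ (Set.Iic n) → Set.MapsTo φ (Set.Iic n) s →
      (fun i : Fin (n + 1) => φ i) = s.orderEmbOfFin hs := fun φ hφ hφs =>
    orderEmbOfFin_unique hs (fun i => hφs (Nat.le_of_lt_succ i.2))
      fun i j hij => hφ (Nat.le_of_lt_succ i.2) (Nat.le_of_lt_succ j.2) hij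
  intro t ht
  exact congrFun ((sorted f hf hfs).trans (sorted g hg hgs).symm) ⟨t, Nat.lt_succ_of_le ht⟩

end LinearOrder

section OrderedGroup

variable {α : Type*} [AddCommGroup α] [LinearOrder α] [IsOrderedAddMonoid α]

lemma nsmul_left_injective {d : α} (hd : d ≠ 0) : Function.Injective fun n : ℕ => n • d := by
  rcases hd.lt_or_gt with hd | hd
  · intro i j hij
    exact (nsmul_left_strictMono (neg_pos.2 hd)).injective (by simp only [smul_neg, hij])
  · exact (nsmul_left_strictMono hd).injective

lemma StrictMonoOn.zigzag_add {a : ℕ → α} {n : ℕ} (ha : StrictMonoOn a (Set.Iic n)) :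
    StrictMonoOn (fun t => a (t / 2) + a ((t + 1) / 2)) (Set.Iic (2 * n)) := by
  refine strictMonoOn_Iic_of_lt_succ fun t ht => ?_
  show a (t / 2) + a ((t + 1) / 2) < a ((t + 1) / 2) + a ((t + 1 + 1) / 2)
  have step : a (t / 2) < a (t / 2 + 1) :=
    ha (Set.mem_Iic.2 (by omega)) (Set.mem_Iic.2 (by omega)) (Nat.lt_succ_self _)
  rcases Nat.even_or_odd' t with ⟨i, rfl | rfl⟩
  · rw [show 2 * i / 2 = i by omega, show (2 * i + 1) / 2 = i by omega,
      show (2 * i + 1 + 1) / 2 = i + 1 by omega] at *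
    exact add_lt_add_right step _
  · rw [show (2 * i + 1) / 2 = i by omega, show (2 * i + 1 + 1) / 2 = i + 1 by omega,
      show (2 * i + 1 + 1 + 1) / 2 = i + 1 by omega] at *
    exact add_lt_add_left step _

lemma StrictMonoOn.hook_add {a : ℕ → α} {n : ℕ} (ha : StrictMonoOn a (Set.Iic n)) :
    StrictMonoOn (fun t => a (min t n) + a (t - n)) (Set.Iic (2 * n)) := by
  refine strictMonoOn_Iic_of_lt_succ fun t ht => ?_
  show a (min t n) + a (t - n) < a (min (t + 1) n) + a (t + 1 - n)
  rcases lt_or_ge t n with htn | htn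
  · rw [Nat.sub_eq_zero_of_le htn.le, Nat.sub_eq_zero_of_le htn, min_eq_left htn.le,
      min_eq_left htn]
    exact add_lt_add_left (ha (Set.mem_Iic.2 htn.le) (Set.mem_Iic.2 htn) (Nat.lt_succ_self t)) _
  · rw [min_eq_right htn, min_eq_right (by omega), Nat.sub_add_comm htn]
    exact add_lt_add_right (ha (Set.mem_Iic.2 (show t - n ≤ n by omega))
      (Set.mem_Iic.2 (show t - n + 1 ≤ n by omega)) (Nat.lt_succ_self _)) _

variable [DecidableEq α]

lemma card_hfold_add_mul_le {A : Finset α} (hA : A.Nonempty) (m n : ℕ) :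
    #(hfold m A) + n * (#A - 1) ≤ #(hfold (m + n) A) := by
  induction n with
  | zero => simp
  | succ n ih =>
    have : #(hfold (m + n) A) + #A - 1 ≤ #(hfold (m + n) A + A) := by
      convert cauchy_davenport_add_of_linearOrder_isCancelAdd (hfold_nonempty hA (m + n)) hA
    rw [← add_assoc, hfold_succ, Nat.succ_mul]
    have := hA.card_pos
    omega

lemma card_arithProg (a : α) {d : α} (hd : d ≠ 0) (k : ℕ) : #(arithProg a d k) = k := by
  rw [arithProg, card_image_of_injective _ fun i j hij =>
    nsmul_left_injective hd (add_left_cancel hij), card_range]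

theorem eq_arithProg_of_card_add_self {A : Finset α} {n : ℕ} (hn : n ≠ 0) (hA : #A = n + 1)
    (hAA : #(A + A) = 2 * n + 1) : ∃ a d, 0 < d ∧ A = arithProg a d (n + 1) := by
  obtain ⟨a, ha, rfl⟩ := exists_strictMonoOn_Iic_image_range_eq A hA
  have hsum : ∀ i j, i ≤ n → j ≤ n →
      a i + a j ∈ (range (n + 1)).image a + (range (n + 1)).image a :=
    fun i j hi hj => add_mem_add (mem_image_of_mem a (mem_range.2 (by omega)))
      (mem_image_of_mem a (mem_range.2 (by omega)))
  have hchains := eqOn_Iic_of_strictMonoOn_of_mapsTo hAA ha.zigzag_add ha.hook_add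
    (fun t (ht : t ≤ 2 * n) => mem_coe.2 (hsum (t / 2) ((t + 1) / 2) (by omega) (by omega)))
    (fun t (ht : t ≤ 2 * n) => mem_coe.2 (hsum (min t n) (t - n) (min_le_right t n) (by omega)))
  have hrec : ∀ t ≤ n, a t + a 0 = a (t / 2) + a ((t + 1) / 2) := fun t ht => by
    simpa [min_eq_left ht, Nat.sub_eq_zero_of_le ht] using (hchains (show t ≤ 2 * n by omega)).symm
  refine ⟨a 0, a 1 - a 0, sub_pos.2 (ha (Set.mem_Iic.2 (Nat.zero_le n))
    (Set.mem_Iic.2 (Nat.one_le_iff_ne_zero.2 hn)) one_pos), ?_⟩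
  exact image_congr fun i hi =>
    eq_add_nsmul_of_add_eq_add_half hrec i (Nat.le_of_lt_succ (mem_range.1 hi))

end OrderedGroup

theorem stmt14 (h k : ℕ) (hh : 3 ≤ h) (hk : 3 ≤ k) (A : Finset ℤ) (hA : A.card = k) :
    (hfold h A).card = h * k - h + 1 ↔
      ∃ a d : ℤ, d ≠ 0 ∧ A = (Finset.range k).image (fun i : ℕ => a + (i : ℤ) * d) := by
  obtain ⟨n, rfl⟩ : ∃ n, k = n + 1 := ⟨k - 1, by omega⟩
  have hAP : ∀ a d : ℤ,
      (range (n + 1)).image (fun i : ℕ => a + (i : ℤ) * d) = arithProg a d (n + 1) :=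
    fun a d => by simp only [arithProg, nsmul_eq_mul]
  simp only [hAP]
  have hmul : h * (n + 1) = h * n + h := Nat.mul_succ h n
  constructor
  · intro hcard
    have hne : A.Nonempty := card_pos.1 (by omega)
    have upper : #(A + A) + (h - 2) * n ≤ #(hfold h A) := by
      simpa [hfold_two, hA, Nat.add_sub_cancel' (by omega : 2 ≤ h)]
        using card_hfold_add_mul_le hne 2 (h - 2)
    have lower : 1 + 2 * n ≤ #(A + A) := by
      simpa [hfold_zero, hfold_two, hA] using card_hfold_add_mul_le hne 0 2
    have hsplit : (h - 2) * n + 2 * n = h * n := by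
      rw [← Nat.add_mul, Nat.sub_add_cancel (by omega)]
    obtain ⟨a, d, hd, rfl⟩ := eq_arithProg_of_card_add_self (by omega) hA (by omega)
    exact ⟨a, d, hd.ne', rfl⟩
  · rintro ⟨a, d, hd, rfl⟩
    rw [hfold_arithProg a d (by omega), card_arithProg _ hd, Nat.add_sub_cancel]
    omega
end

section
/- The set of possible sizes of the 3-fold sumset of a 3-element set of integers is exactly {7, 9, 10}; i.e., {|3A| : A ⊆ ℤ, |A| = 3} = {7, 9, 10}. -/
open Pointwise Finset

lemma sorted3' (A : Finset ℤ) (h : A.card = 3) : ∃ a b c : ℤ, a < b ∧ b < c ∧ A = {a,b,c} := by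
  obtain ⟨a, b, c, hab, hac, hbc, rfl⟩ := Finset.card_eq_three.mp h
  rcases lt_trichotomy a b with h1 | h1 | h1
  · rcases lt_trichotomy b c with h2 | h2 | h2
    · exact ⟨a, b, c, h1, h2, rfl⟩
    · exact absurd h2 hbc
    · rcases lt_trichotomy a c with h3 | h3 | h3
      · exact ⟨a, c, b, h3, h2, by ext z; simp; tauto⟩
      · exact absurd h3 hac
      · exact ⟨c, a, b, h3, h1, by ext z; simp; tauto⟩
  · exact absurd h1 hab
  · rcases lt_trichotomy a c with h2 | h2 | h2
    · exact ⟨b, a, c, h1, h2, by ext z; simp; tauto⟩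
    · exact absurd h2 hac
    · rcases lt_trichotomy b c with h3 | h3 | h3
      · exact ⟨b, c, a, h3, h2, by ext z; simp; tauto⟩
      · exact absurd h3 hbc
      · exact ⟨c, b, a, h3, h1, by ext z; simp; tauto⟩

lemma sum3' (x y : ℤ) :
    (({0,x,y}:Finset ℤ) + {0,x,y} + {0,x,y}) =
    {0, x, y, 2*x, x+y, 2*y, 3*x, 2*x+y, x+2*y, 3*y} := by
  ext z
  simp only [Finset.mem_add, Finset.mem_insert, Finset.mem_singleton]
  constructor
  · rintro ⟨a, ⟨p, (rfl|rfl|rfl), q, (rfl|rfl|rfl), rfl⟩, r, (rfl|rfl|rfl), rfl⟩ <;> omega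
  · have mk : ∀ p q r : ℤ, (p = 0 ∨ p = x ∨ p = y) → (q = 0 ∨ q = x ∨ q = y) →
        (r = 0 ∨ r = x ∨ r = y) → z = p + q + r →
        ∃ a, (∃ p, (p = 0 ∨ p = x ∨ p = y) ∧ ∃ q, (q = 0 ∨ q = x ∨ q = y) ∧ p + q = a) ∧
          ∃ r, (r = 0 ∨ r = x ∨ r = y) ∧ a + r = z :=
      fun p q r hp hq hr hz => ⟨p + q, ⟨p, hp, q, hq, rfl⟩, r, hr, by omega⟩
    rintro (h|h|h|h|h|h|h|h|h|h)
    · exact mk 0 0 0 (by tauto) (by tauto) (by tauto) (by omega)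
    · exact mk 0 0 x (by tauto) (by tauto) (by tauto) (by omega)
    · exact mk 0 0 y (by tauto) (by tauto) (by tauto) (by omega)
    · exact mk 0 x x (by tauto) (by tauto) (by tauto) (by omega)
    · exact mk 0 x y (by tauto) (by tauto) (by tauto) (by omega)
    · exact mk 0 y y (by tauto) (by tauto) (by tauto) (by omega)
    · exact mk x x x (by tauto) (by tauto) (by tauto) (by omega)
    · exact mk x x y (by tauto) (by tauto) (by tauto) (by omega)
    · exact mk x y y (by tauto) (by tauto) (by tauto) (by omega)
    · exact mk y y y (by tauto) (by tauto) (by tauto) (by omega)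

lemma key3' (x y : ℤ) (hx : 0 < x) (hxy : x < y) :
    (({0,x,y}:Finset ℤ) + {0,x,y} + {0,x,y}).card = 7 ∨
    (({0,x,y}:Finset ℤ) + {0,x,y} + {0,x,y}).card = 9 ∨
    (({0,x,y}:Finset ℤ) + {0,x,y} + {0,x,y}).card = 10 := by
  rw [sum3']
  by_cases h2 : y = 2*x
  · left
    subst h2
    have e : ({0, x, 2*x, 2*x, x+2*x, 2*(2*x), 3*x, 2*x+2*x, x+2*(2*x), 3*(2*x)} : Finset ℤ)
        = {0, x, 2*x, 3*x, 4*x, 5*x, 6*x} := by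
      ext z
      simp only [Finset.mem_insert, Finset.mem_singleton]
      omega
    rw [e]
    repeat rw [Finset.card_insert_of_notMem (by
      simp only [Finset.mem_insert, Finset.mem_singleton]; push_neg; omega)]
    rfl
  by_cases h3 : y = 3*x
  · right; left
    subst h3
    have e : ({0, x, 3*x, 2*x, x+3*x, 2*(3*x), 3*x, 2*x+3*x, x+2*(3*x), 3*(3*x)} : Finset ℤ)
        = {0, x, 2*x, 3*x, 4*x, 5*x, 6*x, 7*x, 9*x} := by
      ext z
      simp only [Finset.mem_insert, Finset.mem_singleton]
      omega
    rw [e]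
    repeat rw [Finset.card_insert_of_notMem (by
      simp only [Finset.mem_insert, Finset.mem_singleton]; push_neg; omega)]
    rfl
  by_cases h4 : 2*y = 3*x
  · right; left
    have e : ({0, x, y, 2*x, x+y, 2*y, 3*x, 2*x+y, x+2*y, 3*y} : Finset ℤ)
        = {0, x, y, 2*x, x+y, 2*y, 2*x+y, x+2*y, 3*y} := by
      ext z
      simp only [Finset.mem_insert, Finset.mem_singleton]
      omega
    rw [e]
    repeat rw [Finset.card_insert_of_notMem (by
      simp only [Finset.mem_insert, Finset.mem_singleton]; push_neg; omega)]
    rfl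
  · right; right
    repeat rw [Finset.card_insert_of_notMem (by
      simp only [Finset.mem_insert, Finset.mem_singleton]; push_neg; omega)]
    rfl

lemma card_translate' (a : ℤ) (B : Finset ℤ) :
    (({a} + B) + ({a} + B) + ({a} + B)).card = (B + B + B).card := by
  have : ({a} + B) + ({a} + B) + ({a} + B) = {a+a+a} + (B + B + B) := by
    rw [← Finset.singleton_add_singleton, ← Finset.singleton_add_singleton]
    abel
  rw [this, Finset.singleton_add, Finset.card_vadd_finset]

lemma repr_translate' (a p q : ℤ) : ({a,p,q} : Finset ℤ) = {a} + {0, p-a, q-a} := by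
  rw [Finset.singleton_add]
  ext z
  simp only [Finset.mem_insert, Finset.mem_singleton, Finset.mem_vadd_finset]
  constructor
  · rintro (h|h|h)
    · exact ⟨0, by tauto, by simpa using h.symm⟩
    · exact ⟨p - a, by tauto, by simp [vadd_eq_add]; omega⟩
    · exact ⟨q - a, by tauto, by simp [vadd_eq_add]; omega⟩
  · rintro ⟨w, (rfl|rfl|rfl), rfl⟩ <;> simp [vadd_eq_add]

theorem stmt15 :
    {t : ℕ | ∃ A : Finset ℤ, A.card = 3 ∧ (A + A + A).card = t} = {7, 9, 10} := by
  ext t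
  simp only [Set.mem_setOf_eq, Set.mem_insert_iff, Set.mem_singleton_iff]
  constructor
  · rintro ⟨A, hA, rfl⟩
    obtain ⟨a, b, c, hab, hbc, rfl⟩ := sorted3' A hA
    rw [repr_translate' a b c, card_translate']
    exact key3' (b - a) (c - a) (by omega) (by omega)
  · rintro (rfl | rfl | rfl)
    · exact ⟨{0, 1, 2}, by decide, by decide⟩
    · exact ⟨{0, 1, 3}, by decide, by decide⟩
    · exact ⟨{0, 1, 4}, by decide, by decide⟩
end

section
/- Let 0 < a < b be integers with gcd(a, b) = 1 and A = {0, a, b}. Then for every h ≥ 1, |hA| = C(h+2, 2) - C(max(h+2-b, 0), 2). -/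
open Pointwise Finset

/-!
An element of `h{0, a, b}` is `i a + j b` with `i + j ≤ h`. Since `a ≤ b`, trading `b` copies of `a`
for `a` copies of `b` never increases `i + j`, so every element has a representative with `i < b`;
by coprimality these representatives are distinct. They are the lattice points `i + j ≤ h` minus
those with `i ≥ b`, which form a translated copy of the triangle of size `h - b`.
-/

def triangle (h : ℕ) : Finset (ℕ × ℕ) :=
  (range (h + 1) ×ˢ range (h + 1)).filter (fun p => p.1 + p.2 ≤ h)

@[simp]
lemma mem_triangle {h : ℕ} {p : ℕ × ℕ} : p ∈ triangle h ↔ p.1 + p.2 ≤ h := by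
  simp only [triangle, mem_filter, mem_product, mem_range]
  omega

lemma triangle_succ (h : ℕ) :
    triangle (h + 1) = triangle h ∪ antidiagonal (h + 1) := by
  ext p
  simp only [mem_union, mem_triangle, HasAntidiagonal.mem_antidiagonal]
  omega

lemma card_triangle (h : ℕ) : (triangle h).card = (h + 2).choose 2 := by
  induction h with
  | zero => rfl
  | succ n ih =>
    have hdisj : Disjoint (triangle n) (antidiagonal (n + 1)) := by
      rw [disjoint_left]
      intro p hp hp'
      rw [mem_triangle] at hp
      rw [HasAntidiagonal.mem_antidiagonal] at hp'
      omega
    rw [triangle_succ, card_union_of_disjoint hdisj, ih, Nat.card_antidiagonal,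
      Nat.choose_succ_succ (n + 2) 1, Nat.choose_one_right, add_comm]

lemma filter_le_fst_triangle {m h : ℕ} (hm : m ≤ h) :
    (triangle h).filter (fun p => m ≤ p.1) = (triangle (h - m)).image (fun p => (p.1 + m, p.2)) := by
  ext ⟨i, j⟩
  simp only [mem_filter, mem_triangle, mem_image, Prod.mk.injEq, Prod.exists]
  constructor
  · rintro ⟨hij, hmi⟩
    exact ⟨i - m, j, by omega, by omega, rfl⟩
  · rintro ⟨i', j', hij, rfl, rfl⟩
    omega

lemma card_filter_le_fst_triangle (m h : ℕ) :
    ((triangle h).filter (fun p => m ≤ p.1)).card = (h + 2 - m).choose 2 := by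
  rcases le_or_gt m h with hm | hm
  · have hinj : Function.Injective (fun p : ℕ × ℕ => (p.1 + m, p.2)) := fun p q hpq => by
      simp only [Prod.mk.injEq, Nat.add_right_cancel_iff] at hpq
      exact Prod.ext hpq.1 hpq.2
    rw [filter_le_fst_triangle hm, card_image_of_injective _ hinj, card_triangle]
    congr 1
    omega
  · rw [Nat.choose_eq_zero_of_lt (by omega), card_eq_zero, filter_eq_empty_iff]
    intro p hp
    rw [mem_triangle] at hp
    omega

lemma hfold_zero_pair_eq_image_triangle {G : Type*} [AddCommMonoid G] [DecidableEq G]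
    (a b : G) (h : ℕ) :
    hfold h {0, a, b} = (triangle h).image (fun p => p.1 • a + p.2 • b) := by
  induction h with
  | zero =>
    have : triangle 0 = {(0, 0)} := by decide
    simp [hfold, this]
  | succ n ih =>
    ext x
    simp only [hfold, ih, mem_add, mem_image, mem_triangle, mem_insert, mem_singleton, Prod.exists]
    constructor
    · rintro ⟨_, ⟨i, j, hij, rfl⟩, z, hz, rfl⟩
      rcases hz with rfl | rfl | rfl
      · exact ⟨i, j, by omega, by rw [add_zero]⟩
      · exact ⟨i + 1, j, by omega, by rw [succ_nsmul]; abel⟩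
      · exact ⟨i, j + 1, by omega, by rw [succ_nsmul, add_assoc]⟩
    · rintro ⟨i, j, hij, rfl⟩
      rcases Nat.lt_or_ge (i + j) (n + 1) with hlt | hge
      · exact ⟨_, ⟨i, j, by omega, rfl⟩, 0, Or.inl rfl, add_zero _⟩
      · rcases i with _ | i
        · obtain ⟨j, rfl⟩ : ∃ j', j = j' + 1 := ⟨j - 1, by omega⟩
          exact ⟨_, ⟨0, j, by omega, rfl⟩, b, Or.inr (Or.inr rfl), by rw [succ_nsmul, add_assoc]⟩
        · exact ⟨_, ⟨i, j, by omega, rfl⟩, a, Or.inr (Or.inl rfl), by rw [succ_nsmul]; abel⟩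

section TwoGenerators

variable {a b : ℕ}

lemma image_triangle_eq_image_filter_fst_lt (hab : a ≤ b) (hb : 0 < b) (h : ℕ) :
    (triangle h).image (fun p => p.1 * a + p.2 * b)
      = ((triangle h).filter (fun p => p.1 < b)).image (fun p => p.1 * a + p.2 * b) := by
  refine Subset.antisymm ?_ (image_subset_image (filter_subset _ _))
  simp only [subset_iff, mem_image, mem_filter, mem_triangle, Prod.exists]
  rintro _ ⟨i, j, hij, rfl⟩
  have hdiv := Nat.mod_add_div i b
  have hle : i / b * a ≤ b * (i / b) := by rw [mul_comm b]; exact Nat.mul_le_mul_left _ hab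
  refine ⟨i % b, j + i / b * a, ⟨by omega, Nat.mod_lt i hb⟩, ?_⟩
  conv_rhs => rw [← hdiv]
  ring

lemma injOn_filter_fst_lt (hcop : Nat.Coprime a b) (s : Finset (ℕ × ℕ)) :
    Set.InjOn (fun p => p.1 * a + p.2 * b) (s.filter (fun p => p.1 < b) : Set (ℕ × ℕ)) := by
  rintro ⟨i, j⟩ hp ⟨i', j'⟩ hp' heq
  simp only [coe_filter, Set.mem_ofPred_eq] at hp hp' heq
  have hmod : i * a ≡ i' * a [MOD b] := by
    simpa [Nat.ModEq, Nat.add_mul_mod_self_right] using congrArg (· % b) heq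
  have hi : i = i' := (hmod.cancel_right_of_coprime hcop.symm).eq_of_lt_of_lt hp.2 hp'.2
  subst hi
  have hj : j = j' := Nat.eq_of_mul_eq_mul_right (by omega) (Nat.add_left_cancel heq)
  rw [hj]

lemma card_image_triangle (hab : a ≤ b) (hcop : Nat.Coprime a b) (hb : 0 < b) (h : ℕ) :
    ((triangle h).image (fun p => p.1 * a + p.2 * b)).card
      = (h + 2).choose 2 - (h + 2 - b).choose 2 := by
  have hsplit := card_filter_add_card_filter_not (s := triangle h) (fun p => p.1 < b)
  simp only [not_lt, card_filter_le_fst_triangle, card_triangle] at hsplit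
  rw [image_triangle_eq_image_filter_fst_lt hab hb, card_image_of_injOn (injOn_filter_fst_lt hcop _)]
  omega

end TwoGenerators

theorem stmt16_general (a b : ℤ) (ha : 0 < a) (hab : a < b) (hgcd : Int.gcd a b = 1)
    (h : ℕ) :
    (hfold h ({0, a, b} : Finset ℤ)).card
      = (h + 2).choose 2 - ((h : ℤ) + 2 - b).toNat.choose 2 := by
  lift a to ℕ using ha.le
  lift b to ℕ using (ha.trans hab).le
  rw [Int.gcd_natCast_natCast] at hgcd
  have hcast : (triangle h).image (fun p => p.1 • (a : ℤ) + p.2 • (b : ℤ))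
      = ((triangle h).image (fun p => p.1 * a + p.2 * b)).image ((↑) : ℕ → ℤ) := by
    rw [image_image]
    congr 1
  rw [hfold_zero_pair_eq_image_triangle, hcast, card_image_of_injective _ Nat.cast_injective,
    card_image_triangle (by omega) hgcd (by omega)]
  congr 2
  omega

theorem stmt16 (a b : ℤ) (ha : 0 < a) (hab : a < b) (hgcd : Int.gcd a b = 1)
    (h : ℕ) (hh : 1 ≤ h) :
    (hfold h ({0, a, b} : Finset ℤ)).card
      = (h + 2).choose 2 - ((h : ℤ) + 2 - b).toNat.choose 2 :=
  stmt16_general a b ha hab hgcd h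
end
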